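/- arXiv:1607.06211 — 2 statements merged into one kernel-verified Lean document; each statement's English description precedes it below -/
import Mathlib

section
/- The total progeny of a Galton–Watson process with offspring distribution μ equals the first hitting time of -1 by a random walk started at 0 whose increments I satisfy I + 1 ∼ μ (Dwass/Otter identity, distributional equality). -/
/-!
List the offspring numbers of the vertices of a Galton–Watson tree in breadth-first order as
`x₀, x₁, …`. If generation `k` starts at position `c_k`, the walk `S_j = ∑_{i<j} (x_i - 1)`
satisfies `S_{c_k} = Z_k - 1` and, moving down by at most one per step, stays `≥ 0` inside each
nonempty generation; so it first hits `-1` exactly when the tree is exhausted, at the total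
progeny. On the event that the first `n` breadth-first offspring numbers are a given first-passage
vector `y`, these numbers are read off fixed distinct variables `ξ k i` determined by `y`, so this
event has the probability that `(ξw 0, …, ξw (n-1)) = y`; summing over `y` gives
`P[N = n] = P[T = n]`. For the second identity, exactly one of the `n` cyclic rotations of a
vector with sum `n - 1` is a first-passage vector (the one starting at the first minimum of its
walk), and rotations preserve the product law.
-/

open MeasureTheory ProbabilityTheory ENNReal Finset

theorem ProbabilityTheory.iIndepFun.map_comp_eq_pi {Ω ι κ α : Type*} [MeasurableSpace Ω]
    [MeasurableSpace α] [Fintype κ] {P : Measure Ω} {m : Measure α} {η : ι → Ω → α}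
    (hindep : iIndepFun η P) (hmeas : ∀ i, Measurable (η i)) (hdist : ∀ i, P.map (η i) = m)
    {φ : κ → ι} (hφ : Function.Injective φ) :
    P.map (fun ω k => η (φ k) ω) = Measure.pi fun _ => m := by
  rw [(hindep.precomp hφ).map_fun_eq_pi_map fun k => (hmeas (φ k)).aemeasurable]
  simp only [hdist]

namespace Dwass

def walk (x : ℕ → ℕ) (j : ℕ) : ℤ := ∑ i ∈ range j, ((x i : ℤ) - 1)

def IsFirstPassage (x : ℕ → ℕ) (n : ℕ) : Prop := walk x n = -1 ∧ ∀ j < n, 0 ≤ walk x j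

section Walk

variable {x x' : ℕ → ℕ} {n m : ℕ}

@[simp] lemma walk_zero (x : ℕ → ℕ) : walk x 0 = 0 := rfl

lemma walk_succ (x : ℕ → ℕ) (j : ℕ) : walk x (j + 1) = walk x j + ((x j : ℤ) - 1) :=
  sum_range_succ _ _

lemma walk_eq_sum_sub (x : ℕ → ℕ) (j : ℕ) : walk x j = ∑ i ∈ range j, (x i : ℤ) - j := by
  simp [walk, sum_sub_distrib]

lemma walk_add (x : ℕ → ℕ) (a b : ℕ) :
    walk x (a + b) = walk x a + walk (fun i => x (a + i)) b :=
  sum_range_add _ _ _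

lemma walk_sub_le_walk_add (x : ℕ → ℕ) (a b : ℕ) : walk x a - b ≤ walk x (a + b) := by
  have : (0 : ℤ) ≤ ∑ i ∈ range b, (x (a + i) : ℤ) := sum_nonneg fun _ _ => by positivity
  rw [walk_add, walk_eq_sum_sub (fun i => x (a + i))]
  linarith

lemma walk_congr (h : ∀ i < n, x i = x' i) {j : ℕ} (hj : j ≤ n) : walk x j = walk x' j :=
  sum_congr rfl fun i hi => by rw [h i (by simp at hi; omega)]

lemma isFirstPassage_congr (h : ∀ i < n, x i = x' i) :
    IsFirstPassage x n ↔ IsFirstPassage x' n := by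
  unfold IsFirstPassage
  rw [walk_congr h le_rfl]
  exact and_congr_right' <| forall₂_congr fun j hj => by rw [walk_congr h hj.le]

lemma IsFirstPassage.unique (h : IsFirstPassage x n) (h' : IsFirstPassage x m) : n = m := by
  by_contra hne
  rcases Nat.lt_or_gt_of_ne hne with hlt | hlt
  · have := h'.2 n hlt; rw [h.1] at this; omega
  · have := h.2 m hlt; rw [h'.1] at this; omega

/-- Since the walk moves down by at most one per step, it cannot pass below `0` without landing
on `-1`. -/
theorem isFirstPassage_iff_sInf (x : ℕ → ℕ) (n : ℕ) :
    IsFirstPassage x n ↔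
      (∃ l, 1 ≤ l ∧ walk x l = -1) ∧ sInf {l | 1 ≤ l ∧ walk x l = -1} = n := by
  constructor
  · rintro ⟨hn, hpos⟩
    have hn1 : 1 ≤ n := Nat.one_le_iff_ne_zero.2 fun h => by subst h; simp at hn
    refine ⟨⟨n, hn1, hn⟩, IsLeast.csInf_eq ⟨⟨hn1, hn⟩, fun l hl => ?_⟩⟩
    by_contra! hlt
    have := hpos l hlt
    rw [hl.2] at this
    omega
  · rintro ⟨hex, hinf⟩
    have hn : 1 ≤ n ∧ walk x n = -1 := hinf ▸ Nat.sInf_mem hex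
    refine ⟨hn.2, fun j hj => ?_⟩
    induction j with
    | zero => simp
    | succ j ih =>
      have hne : walk x (j + 1) ≠ -1 := fun h =>
        Nat.notMem_of_lt_sInf (hinf ▸ hj)
          (show j + 1 ∈ {l | 1 ≤ l ∧ walk x l = -1} from ⟨by omega, h⟩)
      have := walk_succ x j
      have := ih (by omega)
      omega

end Walk

/-- Breadth-first exploration of the tree in which the vertex numbered `i` (in breadth-first
order) has `x i` children: the first component is the size of generation `k`, the second the
number of vertices in earlier generations. -/
def explore (x : ℕ → ℕ) : ℕ → ℕ × ℕ
  | 0 => (1, 0)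
  | k + 1 => (∑ i ∈ range (explore x k).1, x ((explore x k).2 + i),
      (explore x k).2 + (explore x k).1)

def treeGen (x : ℕ → ℕ) (k : ℕ) : ℕ := (explore x k).1

section Tree

variable {x : ℕ → ℕ} {n K : ℕ}

@[simp] lemma treeGen_zero (x : ℕ → ℕ) : treeGen x 0 = 1 := rfl

lemma explore_snd (x : ℕ → ℕ) (k : ℕ) : (explore x k).2 = ∑ j ∈ range k, treeGen x j := by
  induction k with
  | zero => rfl
  | succ k ih => rw [sum_range_succ, ← ih]; rfl

lemma treeGen_succ (x : ℕ → ℕ) (k : ℕ) :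
    treeGen x (k + 1) = ∑ i ∈ range (treeGen x k), x (∑ j ∈ range k, treeGen x j + i) := by
  rw [← explore_snd]; rfl

lemma walk_sum_range_treeGen (x : ℕ → ℕ) (k : ℕ) :
    walk x (∑ j ∈ range k, treeGen x j) = treeGen x k - 1 := by
  induction k with
  | zero => simp
  | succ k ih =>
    rw [sum_range_succ, walk_add, ih, walk_eq_sum_sub, treeGen_succ, Nat.cast_sum]
    ring

lemma walk_nonneg_of_treeGen_pos (hK : ∀ k < K, 1 ≤ treeGen x k) :
    ∀ j < ∑ k ∈ range K, treeGen x k, 0 ≤ walk x j := by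
  induction K with
  | zero => simp
  | succ K ih =>
    intro j hj
    rw [sum_range_succ] at hj
    rcases lt_or_ge j (∑ k ∈ range K, treeGen x k) with hjK | hjK
    · exact ih (fun k hk => hK k (by omega)) j hjK
    · obtain ⟨b, rfl⟩ := Nat.exists_eq_add_of_le hjK
      have hlow := walk_sub_le_walk_add x (∑ k ∈ range K, treeGen x k) b
      rw [walk_sum_range_treeGen] at hlow
      omega

lemma treeGen_eq_zero_of_le (h : treeGen x K = 0) {k : ℕ} (hk : K ≤ k) :
    treeGen x k = 0 := by
  induction k, hk using Nat.le_induction with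
  | base => exact h
  | succ k _ ih => rw [treeGen_succ, ih, sum_range_zero]

lemma sum_range_treeGen_of_le (h : treeGen x K = 0) {k : ℕ} (hk : K ≤ k) :
    ∑ j ∈ range k, treeGen x j = ∑ j ∈ range K, treeGen x j := by
  rw [← sum_range_add_sum_Ico _ hk,
    sum_eq_zero fun j hj => treeGen_eq_zero_of_le h (mem_Ico.1 hj).1, add_zero]

lemma sum_range_treeGen_le (h : treeGen x K = 0) (k : ℕ) :
    ∑ j ∈ range k, treeGen x j ≤ ∑ j ∈ range K, treeGen x j :=
  calc ∑ j ∈ range k, treeGen x j ≤ ∑ j ∈ range (max k K), treeGen x j :=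
        sum_le_sum_of_subset (range_subset_range.2 (le_max_left k K))
    _ = ∑ j ∈ range K, treeGen x j := sum_range_treeGen_of_le h (le_max_right k K)

lemma isFirstPassage_sum_range_treeGen (hK : ∀ k < K, 1 ≤ treeGen x k)
    (h : treeGen x K = 0) :
    IsFirstPassage x (∑ k ∈ range K, treeGen x k) :=
  ⟨by rw [walk_sum_range_treeGen, h]; rfl, walk_nonneg_of_treeGen_pos hK⟩

theorem isFirstPassage_iff_extinct :
    IsFirstPassage x n ↔ ∃ K, treeGen x K = 0 ∧ ∑ k ∈ range K, treeGen x k = n := by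
  classical
  by_cases hext : ∃ K, treeGen x K = 0
  · have hfp := isFirstPassage_sum_range_treeGen
      (fun k hk => Nat.one_le_iff_ne_zero.2 (Nat.find_min hext hk)) (Nat.find_spec hext)
    refine ⟨fun h => ⟨_, Nat.find_spec hext, hfp.unique h⟩, ?_⟩
    rintro ⟨K, hK, rfl⟩
    rwa [sum_range_treeGen_of_le (Nat.find_spec hext) (Nat.find_min' hext hK)]
  · push Not at hext
    refine iff_of_false (fun h => ?_) fun ⟨K, hK, _⟩ => hext K hK
    have hpos : ∀ k < n + 1, 1 ≤ treeGen x k := fun k _ => Nat.one_le_iff_ne_zero.2 (hext k)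
    have hgrow : n + 1 ≤ ∑ k ∈ range (n + 1), treeGen x k := by
      simpa using card_nsmul_le_sum (range (n + 1)) (treeGen x) 1 fun k hk =>
        hpos k (by simpa using hk)
    have := walk_nonneg_of_treeGen_pos hpos n (by omega)
    rw [h.1] at this
    omega

lemma sum_range_treeGen_le_of_isFirstPassage (h : IsFirstPassage x n) (k : ℕ) :
    ∑ j ∈ range k, treeGen x j ≤ n := by
  obtain ⟨K, hK, rfl⟩ := isFirstPassage_iff_extinct.1 h
  exact sum_range_treeGen_le hK k

lemma tsum_treeGen_of_eq_zero (h : treeGen x K = 0) :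
    ∑' k, (treeGen x k : ℝ≥0∞) = ((∑ k ∈ range K, treeGen x k : ℕ) : ℝ≥0∞) := by
  rw [Nat.cast_sum]
  exact tsum_eq_sum fun k hk => by
    rw [treeGen_eq_zero_of_le h (by simpa using hk), Nat.cast_zero]

theorem isFirstPassage_iff_tsum_treeGen :
    IsFirstPassage x n ↔ ∑' k, (treeGen x k : ℝ≥0∞) = n := by
  rw [isFirstPassage_iff_extinct]
  constructor
  · rintro ⟨K, hK, rfl⟩
    exact tsum_treeGen_of_eq_zero hK
  · intro h
    by_cases hext : ∃ K, treeGen x K = 0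
    · obtain ⟨K, hK⟩ := hext
      rw [tsum_treeGen_of_eq_zero hK, Nat.cast_inj] at h
      exact ⟨K, hK, h⟩
    · push Not at hext
      have : ∑' k, (treeGen x k : ℝ≥0∞) = ⊤ := by
        refine top_unique ?_
        calc ⊤ = ∑' _ : ℕ, (1 : ℝ≥0∞) := (ENNReal.tsum_const_eq_top_of_ne_zero one_ne_zero).symm
          _ ≤ ∑' k, (treeGen x k : ℝ≥0∞) := ENNReal.tsum_le_tsum fun k => by
            exact_mod_cast Nat.one_le_iff_ne_zero.2 (hext k)
      rw [this] at h
      exact absurd h.symm (natCast_ne_top n)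

end Tree

/-- Vertex number `j` in breadth-first order, as (generation, rank within the generation), for
the generation sizes `z`. -/
noncomputable def bfsIndex (z : ℕ → ℕ) (j : ℕ) : ℕ × ℕ :=
  let k := sInf {k | j < ∑ l ∈ range (k + 1), z l}
  (k, j - ∑ l ∈ range k, z l)

section BfsIndex

variable {z : ℕ → ℕ} {k i : ℕ}

lemma bfsIndex_sum_range_add (hi : i < z k) :
    bfsIndex z (∑ l ∈ range k, z l + i) = (k, i) := by
  have hmem : ∑ l ∈ range k, z l + i < ∑ l ∈ range (k + 1), z l := by
    rw [sum_range_succ]; omega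
  have hk : sInf {k' | ∑ l ∈ range k, z l + i < ∑ l ∈ range (k' + 1), z l} = k := by
    refine le_antisymm (Nat.sInf_le hmem) (le_csInf ⟨k, hmem⟩ fun k' hk' => ?_)
    by_contra! hlt
    have hk'' : ∑ l ∈ range k, z l + i < ∑ l ∈ range (k' + 1), z l := hk'
    have := sum_le_sum_of_subset (f := z) (range_subset_range.2 (show k' + 1 ≤ k by omega))
    omega
  simp only [bfsIndex, hk, add_tsub_cancel_left]

lemma exists_eq_sum_range_add {K j : ℕ} (hj : j < ∑ l ∈ range K, z l) :
    ∃ k, ∃ i < z k, ∑ l ∈ range k, z l + i = j := by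
  induction K with
  | zero => simp at hj
  | succ K ih =>
    rw [sum_range_succ] at hj
    rcases lt_or_ge j (∑ l ∈ range K, z l) with hjK | hjK
    · exact ih hjK
    · exact ⟨K, j - ∑ l ∈ range K, z l, by omega, by omega⟩

lemma bfsIndex_injOn (K : ℕ) : Set.InjOn (bfsIndex z) (Set.Iio (∑ l ∈ range K, z l)) := by
  intro j hj j' hj' h
  obtain ⟨k, i, hi, rfl⟩ := exists_eq_sum_range_add hj
  obtain ⟨k', i', hi', rfl⟩ := exists_eq_sum_range_add hj'
  rw [bfsIndex_sum_range_add hi, bfsIndex_sum_range_add hi', Prod.mk.injEq] at h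
  rw [h.1, h.2]

end BfsIndex

/-- The hypothesis on `x` is only required once the generation sizes agree up to `k`, so that it
can be checked with either description of where generation `k` starts. -/
theorem treeGen_eq_of_offspring {x : ℕ → ℕ} {ξ : ℕ → ℕ → ℕ} {Z : ℕ → ℕ} (hZ0 : Z 0 = 1)
    (hZrec : ∀ k, Z (k + 1) = ∑ i ∈ range (Z k), ξ k i)
    (hx : ∀ k, (∀ j ≤ k, treeGen x j = Z j) →
      ∀ i < Z k, x (∑ j ∈ range k, Z j + i) = ξ k i) :
    treeGen x = Z := by
  suffices h : ∀ k, ∀ j ≤ k, treeGen x j = Z j from funext fun k => h k k le_rfl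
  intro k
  induction k with
  | zero => intro j hj; rw [Nat.le_zero.1 hj, treeGen_zero, hZ0]
  | succ k ih =>
    intro j hj
    rcases Nat.lt_or_ge j (k + 1) with hjk | hjk
    · exact ih j (by omega)
    · obtain rfl : j = k + 1 := by omega
      have hsum : ∑ j ∈ range k, treeGen x j = ∑ j ∈ range k, Z j :=
        sum_congr rfl fun j hj => ih j (by simp at hj; omega)
      rw [treeGen_succ, hZrec, ih k le_rfl, hsum]
      exact sum_congr rfl fun i hi => hx k ih i (mem_range.1 hi)

def sumSet (n : ℕ) : Set (Fin n → ℕ) := {y | ∑ i, y i = n - 1}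

lemma mem_sumSet_iff_sum_range {n : ℕ} (x : ℕ → ℕ) :
    (fun k : Fin n => x k) ∈ sumSet n ↔ ∑ i ∈ range n, x i = n - 1 := by
  simp only [sumSet, Set.mem_ofPred_eq, Fin.sum_univ_eq_sum_range]

def IsFirstMin (s : ℕ → ℤ) (n r : ℕ) : Prop := (∀ l < n, s r ≤ s l) ∧ ∀ l < r, s r < s l

lemma forall_le_add_iff_isFirstMin {s : ℕ → ℤ} {n r : ℕ} (hs : ∀ l, s (n + l) = s l - 1)
    (hr : r < n) :
    (∀ j < n, s r ≤ s (r + j)) ↔ IsFirstMin s n r := by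
  constructor
  · intro h
    have hlt : ∀ l < r, s r < s l := fun l hl => by
      have := h (n - r + l) (by omega)
      rw [show r + (n - r + l) = n + l by omega, hs] at this
      omega
    refine ⟨fun l hl => ?_, hlt⟩
    rcases lt_or_ge l r with hlr | hlr
    · exact (hlt l hlr).le
    · simpa [show r + (l - r) = l by omega] using h (l - r) (by omega)
  · rintro ⟨hle, hlt⟩ j hj
    rcases lt_or_ge (r + j) n with h | h
    · exact hle _ h
    · obtain ⟨l, hl⟩ := Nat.exists_eq_add_of_le h
      have := hlt l (by omega)
      rw [hl, hs]
      omega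

section Cycle

open Fin.NatCast

variable {n : ℕ} [NeZero n]

def periodize (y : Fin n → ℕ) (i : ℕ) : ℕ := y (i : Fin n)

variable (n) in
def firstPassageSet : Set (Fin n → ℕ) := {y | IsFirstPassage (periodize y) n}

def rotate (r : Fin n) (y : Fin n → ℕ) : Fin n → ℕ := fun i => y (i + r)

variable {y : Fin n → ℕ}

lemma periodize_of_lt (y : Fin n → ℕ) {i : ℕ} (hi : i < n) : periodize y i = y ⟨i, hi⟩ := by
  rw [periodize, Fin.natCast_eq_mk hi]

lemma periodize_add_left (y : Fin n → ℕ) (i : ℕ) :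
    periodize y (n + i) = periodize y i := by
  simp only [periodize, Nat.cast_add, Fin.natCast_self, zero_add]

lemma periodize_rotate (r : Fin n) (y : Fin n → ℕ) (i : ℕ) :
    periodize (rotate r y) i = periodize y (r + i) := by
  simp only [periodize, rotate, Nat.cast_add, Fin.cast_val_eq_self, add_comm]

lemma isFirstPassage_periodize_iff (x : ℕ → ℕ) :
    IsFirstPassage (periodize fun k : Fin n => x k) n ↔ IsFirstPassage x n :=
  isFirstPassage_congr fun i hi => by rw [periodize_of_lt _ hi]

lemma mem_sumSet_iff_walk : y ∈ sumSet n ↔ walk (periodize y) n = -1 := by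
  have hwalk : walk (periodize y) n = ((∑ i, y i : ℕ) : ℤ) - n := by
    rw [walk_eq_sum_sub, ← Fin.sum_univ_eq_sum_range, Nat.cast_sum]
    simp only [periodize, Fin.cast_val_eq_self]
  have := NeZero.pos n
  rw [hwalk]
  show ∑ i, y i = n - 1 ↔ _
  omega

lemma walk_periodize_add_left (y : Fin n → ℕ) (j : ℕ) :
    walk (periodize y) (n + j) = walk (periodize y) n + walk (periodize y) j := by
  simp only [walk_add, periodize_add_left]

lemma walk_periodize_rotate (r : Fin n) (y : Fin n → ℕ) (j : ℕ) :
    walk (periodize (rotate r y)) j = walk (periodize y) (r + j) - walk (periodize y) r := by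
  rw [walk_add, add_sub_cancel_left]
  exact congrArg₂ walk (funext (periodize_rotate r y)) rfl

lemma existsUnique_isFirstMin (s : ℕ → ℤ) : ∃! r : Fin n, IsFirstMin s n r := by
  classical
  obtain ⟨m, hm, hmin⟩ := exists_min_image (range n) s ⟨0, mem_range.2 (NeZero.pos n)⟩
  have hex : ∃ r, r < n ∧ ∀ l < n, s r ≤ s l :=
    ⟨m, mem_range.1 hm, fun l hl => hmin l (mem_range.2 hl)⟩
  obtain ⟨hr, hle⟩ := Nat.find_spec hex
  refine ⟨⟨Nat.find hex, hr⟩, ⟨hle, fun l hl => ?_⟩, ?_⟩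
  · by_contra! h
    exact Nat.find_min hex hl ⟨by omega, fun l' hl' => h.trans (hle l' hl')⟩
  · rintro r ⟨hle', hlt'⟩
    refine Fin.ext (le_antisymm ?_ (Nat.find_min' hex ⟨r.isLt, hle'⟩))
    by_contra! h
    exact absurd (hle r r.isLt) (not_le.2 (hlt' _ h))

lemma rotate_mem_firstPassageSet_iff (hy : y ∈ sumSet n) (r : Fin n) :
    rotate r y ∈ firstPassageSet n ↔ IsFirstMin (walk (periodize y)) n r := by
  have hs : ∀ l, walk (periodize y) (n + l) = walk (periodize y) l - 1 := fun l => by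
    rw [walk_periodize_add_left, mem_sumSet_iff_walk.1 hy]
    ring
  rw [← forall_le_add_iff_isFirstMin hs r.isLt]
  show IsFirstPassage _ n ↔ _
  simp only [IsFirstPassage, walk_periodize_rotate, add_comm (r : ℕ) n, hs, sub_nonneg]
  exact ⟨fun h => h.2, fun h => ⟨by ring, h⟩⟩

/-- The cycle lemma of Dvoretzky and Motzkin. -/
lemma existsUnique_rotate_mem_firstPassageSet (hy : y ∈ sumSet n) :
    ∃! r : Fin n, rotate r y ∈ firstPassageSet n :=
  (existsUnique_congr (rotate_mem_firstPassageSet_iff hy)).2 (existsUnique_isFirstMin _)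

lemma mem_sumSet_of_rotate_mem {r : Fin n} (h : rotate r y ∈ firstPassageSet n) :
    y ∈ sumSet n := by
  have hrot : ∑ i, y (i + r) = n - 1 := mem_sumSet_iff_walk.2 h.1
  rwa [Fintype.sum_equiv (Equiv.addRight r) (fun i => y (i + r)) y fun _ => rfl] at hrot

theorem pi_sumSet_eq (m : Measure ℕ) [SigmaFinite m] :
    Measure.pi (fun _ : Fin n => m) (sumSet n)
      = n * Measure.pi (fun _ : Fin n => m) (firstPassageSet n) := by
  have hrot (r : Fin n) :
      MeasurePreserving (rotate r) (Measure.pi fun _ => m) (Measure.pi fun _ => m) := by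
    convert measurePreserving_piCongrLeft (fun _ : Fin n => m) (Equiv.addRight r).symm
    ext y i
    simp [rotate, MeasurableEquiv.coe_piCongrLeft, Equiv.piCongrLeft_apply_eq_cast]
  have hunion : sumSet n = ⋃ r : Fin n, rotate r ⁻¹' firstPassageSet n := by
    ext y
    simp only [Set.mem_iUnion, Set.mem_preimage]
    exact ⟨fun hy => (existsUnique_rotate_mem_firstPassageSet hy).exists,
      fun ⟨_, hr⟩ => mem_sumSet_of_rotate_mem hr⟩
  have hdisj :
      Pairwise (Function.onFun Disjoint fun r : Fin n => rotate r ⁻¹' firstPassageSet n) :=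
    fun r r' hne => Set.disjoint_left.2 fun y hr hr' =>
      hne ((existsUnique_rotate_mem_firstPassageSet (mem_sumSet_of_rotate_mem hr)).unique hr hr')
  rw [hunion, measure_iUnion hdisj fun _ => .of_discrete, tsum_fintype,
    sum_congr rfl fun r _ => (hrot r).measure_preimage
      (MeasurableSet.of_discrete (α := Fin n → ℕ)).nullMeasurableSet,
    sum_const, card_univ, Fintype.card_fin, nsmul_eq_mul]

end Cycle

section GaltonWatson

open Fin.NatCast

variable {Ω : Type*} {n : ℕ} [NeZero n]

noncomputable def bfsLabel (y : Fin n → ℕ) (j : Fin n) : ℕ × ℕ :=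
  bfsIndex (treeGen (periodize y)) j

noncomputable def bfsRecord (ξ : ℕ → ℕ → Ω → ℕ) (y : Fin n → ℕ) (ω : Ω) : Fin n → ℕ :=
  fun j => ξ (bfsLabel y j).1 (bfsLabel y j).2 ω

lemma bfsLabel_injective {y : Fin n → ℕ} (hy : y ∈ firstPassageSet n) :
    Function.Injective (bfsLabel y) := by
  obtain ⟨K, -, hK⟩ := isFirstPassage_iff_extinct.1 hy
  exact fun j j' h => Fin.ext <| bfsIndex_injOn K (by simp [hK]) (by simp [hK]) h

variable {ξ : ℕ → ℕ → Ω → ℕ} {Z : ℕ → Ω → ℕ} (hZ0 : ∀ ω, Z 0 ω = 1)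
  (hZrec : ∀ k ω, Z (k + 1) ω = ∑ i ∈ range (Z k ω), ξ k i ω)
include hZ0 hZrec

lemma treeGen_eq_of_bfsRecord_eq {y : Fin n → ℕ} (hy : y ∈ firstPassageSet n) {ω : Ω}
    (hω : bfsRecord ξ y ω = y) : treeGen (periodize y) = (Z · ω) := by
  refine treeGen_eq_of_offspring (hZ0 ω) (fun k => hZrec k ω) fun k hk i hi => ?_
  have hsum : ∑ j ∈ range k, Z j ω = ∑ j ∈ range k, treeGen (periodize y) j :=
    sum_congr rfl fun j hj => (hk j (by simp at hj; omega)).symm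
  rw [← hk k le_rfl] at hi
  have hlt : ∑ j ∈ range k, treeGen (periodize y) j + i < n :=
    calc _ < ∑ j ∈ range (k + 1), treeGen (periodize y) j := by rw [sum_range_succ]; omega
      _ ≤ n := sum_range_treeGen_le_of_isFirstPassage hy _
  rw [hsum, periodize_of_lt y hlt, ← congrFun hω ⟨_, hlt⟩]
  simp only [bfsRecord, bfsLabel, bfsIndex_sum_range_add hi]

theorem setOf_tsum_eq_iUnion_bfsRecord :
    {ω | ∑' k, (Z k ω : ℝ≥0∞) = n}
      = ⋃ y : firstPassageSet n, bfsRecord ξ y ⁻¹' {(y : Fin n → ℕ)} := by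
  ext ω
  simp only [Set.mem_ofPred_eq, Set.mem_iUnion, Set.mem_preimage, Set.mem_singleton_iff,
    Subtype.exists, exists_prop]
  constructor
  · intro hN
    obtain ⟨y, hy⟩ : ∃ y : Fin n → ℕ,
        ∀ j, y j = ξ (bfsIndex (Z · ω) j).1 (bfsIndex (Z · ω) j).2 ω := ⟨_, fun _ => rfl⟩
    have hgen : treeGen (periodize y) = (Z · ω) := by
      refine treeGen_eq_of_offspring (hZ0 ω) (fun k => hZrec k ω) fun k _ i hi => ?_
      have hle : ∑ j ∈ range (k + 1), Z j ω ≤ n := by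
        have : ((∑ j ∈ range (k + 1), Z j ω : ℕ) : ℝ≥0∞) ≤ n := by
          rw [Nat.cast_sum, ← hN]
          exact ENNReal.sum_le_tsum _
        exact_mod_cast this
      rw [sum_range_succ] at hle
      rw [periodize_of_lt y (by omega), hy, bfsIndex_sum_range_add (z := (Z · ω)) hi]
    refine ⟨y, isFirstPassage_iff_tsum_treeGen.2 (by rw [hgen]; exact hN), ?_⟩
    exact funext fun j => by simp only [bfsRecord, bfsLabel, hgen, hy]
  · rintro ⟨y, hy, hω⟩
    have hgen := congrFun (treeGen_eq_of_bfsRecord_eq hZ0 hZrec hy hω)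
    simpa only [hgen] using isFirstPassage_iff_tsum_treeGen.1 hy

lemma pairwise_disjoint_bfsRecord :
    Pairwise (Function.onFun Disjoint
      fun y : firstPassageSet n => bfsRecord ξ y ⁻¹' {(y : Fin n → ℕ)}) := by
  rintro ⟨y, hy⟩ ⟨y', hy'⟩ hne
  refine Set.disjoint_left.2 fun ω hω hω' => hne (Subtype.ext ?_)
  have hgen := (treeGen_eq_of_bfsRecord_eq hZ0 hZrec hy hω).trans
    (treeGen_eq_of_bfsRecord_eq hZ0 hZrec hy' hω').symm
  calc y = bfsRecord ξ y ω := hω.symm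
    _ = bfsRecord ξ y' ω := funext fun j => by simp only [bfsRecord, bfsLabel, hgen]
    _ = y' := hω'

theorem measure_tsum_eq_pi_firstPassageSet [MeasurableSpace Ω] {P : Measure Ω}
    {m : Measure ℕ}
    (hmeas : ∀ k i, Measurable (ξ k i)) (hdist : ∀ k i, P.map (ξ k i) = m)
    (hindep : iIndepFun (fun p : ℕ × ℕ => ξ p.1 p.2) P) :
    P {ω | ∑' k, (Z k ω : ℝ≥0∞) = n} = Measure.pi (fun _ : Fin n => m) (firstPassageSet n) := by
  have hmeas_record (y : Fin n → ℕ) : Measurable (bfsRecord ξ y) :=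
    measurable_pi_lambda _ fun _ => hmeas _ _
  have hrecord (y : firstPassageSet n) : P (bfsRecord ξ y ⁻¹' {(y : Fin n → ℕ)})
      = Measure.pi (fun _ : Fin n => m) {(y : Fin n → ℕ)} := by
    have hlaw : P.map (bfsRecord ξ y) = Measure.pi fun _ : Fin n => m :=
      hindep.map_comp_eq_pi (fun p => hmeas p.1 p.2) (fun p => hdist p.1 p.2)
        (bfsLabel_injective y.2)
    rw [← hlaw, Measure.map_apply (hmeas_record y) (measurableSet_singleton _)]
  rw [setOf_tsum_eq_iUnion_bfsRecord hZ0 hZrec,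
    measure_iUnion (pairwise_disjoint_bfsRecord hZ0 hZrec (n := n))
      fun y => hmeas_record y (measurableSet_singleton _), tsum_congr hrecord]
  simpa using tsum_measure_preimage_singleton (μ := Measure.pi fun _ : Fin n => m)
    (Set.to_countable (firstPassageSet n)) (f := id) fun _ _ => .of_discrete

end GaltonWatson

end Dwass

open Dwass

theorem gw_total_progeny_dwass_general {Ω : Type*} [MeasureSpace Ω]
    (μ : PMF ℕ)
    -- the Galton–Watson process driven by the i.i.d. family `ξ`
    (ξ : ℕ → ℕ → Ω → ℕ)
    (hmeas : ∀ n i, Measurable (ξ n i))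
    (hdist : ∀ n i, Measure.map (ξ n i) ℙ = μ.toMeasure)
    (hindep : iIndepFun (fun p : ℕ × ℕ => ξ p.1 p.2) ℙ)
    (Z : ℕ → Ω → ℕ)
    (hZ0 : ∀ ω, Z 0 ω = 1)
    (hZrec : ∀ n ω, Z (n + 1) ω = ∑ i ∈ Finset.range (Z n ω), ξ n i ω)
    -- the i.i.d. increments of the random walk
    (ξw : ℕ → Ω → ℕ)
    (hwmeas : ∀ i, Measurable (ξw i))
    (hwdist : ∀ i, Measure.map (ξw i) ℙ = μ.toMeasure)
    (hwindep : iIndepFun ξw ℙ)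
    -- the walk `S n = ∑_{i<n} (ξw i - 1)` and its first hitting time of `-1`
    (S : ℕ → Ω → ℤ)
    (hS : ∀ n ω, S n ω = ∑ i ∈ Finset.range n, ((ξw i ω : ℤ) - 1)) :
    ∀ n : ℕ, 1 ≤ n →
      (ℙ {ω | (∑' k : ℕ, (Z k ω : ℝ≥0∞)) = n}
          = ℙ {ω | (∃ l : ℕ, 1 ≤ l ∧ S l ω = -1) ∧
              sInf {l : ℕ | 1 ≤ l ∧ S l ω = -1} = n}) ∧
      (ℙ {ω | (∑' k : ℕ, (Z k ω : ℝ≥0∞)) = n}).toReal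
        = (1 / (n : ℝ)) *
            (ℙ {ω | ∑ i ∈ Finset.range n, ξw i ω = n - 1}).toReal := by
  intro n hn
  have : NeZero n := ⟨by omega⟩
  have hwalk (A : Set (Fin n → ℕ)) :
      ℙ {ω | (fun k : Fin n => ξw k ω) ∈ A} = Measure.pi (fun _ => μ.toMeasure) A := by
    rw [← hwindep.map_comp_eq_pi hwmeas hwdist Fin.val_injective,
      Measure.map_apply (measurable_pi_lambda _ fun _ => hwmeas _) .of_discrete]
    rfl
  have hN := measure_tsum_eq_pi_firstPassageSet hZ0 hZrec (n := n) hmeas hdist hindep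
  have hT : ℙ {ω | (∃ l : ℕ, 1 ≤ l ∧ S l ω = -1) ∧ sInf {l : ℕ | 1 ≤ l ∧ S l ω = -1} = n}
      = Measure.pi (fun _ => μ.toMeasure) (firstPassageSet n) := by
    rw [← hwalk]
    congr 1
    ext ω
    simp only [Set.mem_ofPred_eq, hS]
    exact ((isFirstPassage_periodize_iff (ξw · ω)).trans (isFirstPassage_iff_sInf _ n)).symm
  have hsum : ℙ {ω | ∑ i ∈ Finset.range n, ξw i ω = n - 1}
      = n * Measure.pi (fun _ => μ.toMeasure) (firstPassageSet n) := by
    rw [← pi_sumSet_eq, ← hwalk]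
    congr 1
    ext ω
    exact (mem_sumSet_iff_sum_range (ξw · ω)).symm
  refine ⟨hN.trans hT.symm, ?_⟩
  rw [hN, hsum, toReal_mul, toReal_natCast, ← mul_assoc, one_div,
    inv_mul_cancel₀ (by positivity), one_mul]

/-- Dwass/Otter identity: the total progeny of a Galton–Watson process with offspring
law `μ` has the same distribution as the first hitting time of `-1` by the random walk
with increments `ξw i - 1`, `ξw i ∼ μ` i.i.d.; in particular
`P[N = n] = (1/n)·P[ξ₁ + ⋯ + ξₙ = n - 1]`. -/
theorem gw_total_progeny_dwass {Ω : Type*} [MeasureSpace Ω]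
    [IsProbabilityMeasure (ℙ : Measure Ω)]
    (μ : PMF ℕ)
    -- the Galton–Watson process driven by the i.i.d. family `ξ`
    (ξ : ℕ → ℕ → Ω → ℕ)
    (hmeas : ∀ n i, Measurable (ξ n i))
    (hdist : ∀ n i, Measure.map (ξ n i) ℙ = μ.toMeasure)
    (hindep : iIndepFun (fun p : ℕ × ℕ => ξ p.1 p.2) ℙ)
    (Z : ℕ → Ω → ℕ)
    (hZ0 : ∀ ω, Z 0 ω = 1)
    (hZrec : ∀ n ω, Z (n + 1) ω = ∑ i ∈ Finset.range (Z n ω), ξ n i ω)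
    -- the i.i.d. increments of the random walk
    (ξw : ℕ → Ω → ℕ)
    (hwmeas : ∀ i, Measurable (ξw i))
    (hwdist : ∀ i, Measure.map (ξw i) ℙ = μ.toMeasure)
    (hwindep : iIndepFun ξw ℙ)
    -- the walk `S n = ∑_{i<n} (ξw i - 1)` and its first hitting time of `-1`
    (S : ℕ → Ω → ℤ)
    (hS : ∀ n ω, S n ω = ∑ i ∈ Finset.range n, ((ξw i ω : ℤ) - 1)) :
    ∀ n : ℕ, 1 ≤ n →
      (ℙ {ω | (∑' k : ℕ, (Z k ω : ℝ≥0∞)) = n}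
          = ℙ {ω | (∃ l : ℕ, 1 ≤ l ∧ S l ω = -1) ∧
              sInf {l : ℕ | 1 ≤ l ∧ S l ω = -1} = n}) ∧
      (ℙ {ω | (∑' k : ℕ, (Z k ω : ℝ≥0∞)) = n}).toReal
        = (1 / (n : ℝ)) *
            (ℙ {ω | ∑ i ∈ Finset.range n, ξw i ω = n - 1}).toReal :=
  gw_total_progeny_dwass_general μ ξ hmeas hdist hindep Z hZ0 hZrec ξw hwmeas hwdist hwindep S hS
end

section
/- Stochastic domination of offspring implies stochastic domination of total progeny: if the offspring law μ of one Galton–Watson process is stochastically dominated by the offspring law ν of another, then the total progeny under μ is stochastically dominated by the total progeny under ν. -/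
/-!
Both total progenies are functions of the array `x (k, i)` of offspring numbers (the number of
children of the `i`-th individual of generation `k`), and the event that the total progeny is at
least `n` is increasing in that array. It is also determined by the entries with `k, i < n`: while
the total progeny stays below `n`, no generation of index `n` or more is alive and no generation
has `n` or more members. The offspring numbers in this box are i.i.d., so the event has probability
`(⨂ μ)(S)` for an upper set `S` of `ℕ^(n × n)`. Stochastic order is preserved by finite
products (Fubini, and the layer-cake formula for the monotone function `a ↦ ν(Sₐ)`), whence
`(⨂ μ)(S) ≤ (⨂ ν)(S)`.
-/

open MeasureTheory ProbabilityTheory ENNReal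

namespace MeasureTheory.Measure

variable {α β : Type*} [MeasurableSpace α] [Preorder α] [MeasurableSpace β] [Preorder β]

def StochasticallyLE (μ ν : Measure α) : Prop :=
  ∀ s, MeasurableSet s → IsUpperSet s → μ s ≤ ν s

theorem StochasticallyLE.lintegral_le {μ ν : Measure α} (h : StochasticallyLE μ ν) {f : α → ℝ}
    (hf : Monotone f) (hfm : Measurable f) (hf0 : 0 ≤ f) :
    ∫⁻ a, ENNReal.ofReal (f a) ∂μ ≤ ∫⁻ a, ENNReal.ofReal (f a) ∂ν := by
  rw [lintegral_eq_lintegral_meas_lt μ (ae_of_all _ hf0) hfm.aemeasurable,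
    lintegral_eq_lintegral_meas_lt ν (ae_of_all _ hf0) hfm.aemeasurable]
  exact lintegral_mono fun t =>
    h _ (measurableSet_lt measurable_const hfm) fun a b hab ha => ha.trans_le (hf hab)

theorem StochasticallyLE.prod {μ₁ ν₁ : Measure α} {μ₂ ν₂ : Measure β} [SFinite μ₂]
    [IsFiniteMeasure ν₂] (h₁ : StochasticallyLE μ₁ ν₁) (h₂ : StochasticallyLE μ₂ ν₂) :
    StochasticallyLE (μ₁.prod μ₂) (ν₁.prod ν₂) := by
  intro s hs hup
  have hslice : ∀ a, MeasurableSet (Prod.mk a ⁻¹' s) := fun a => measurable_prodMk_left hs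
  have hmono : Monotone fun a => (ν₂ (Prod.mk a ⁻¹' s)).toReal := fun a a' ha =>
    toReal_mono (measure_ne_top _ _) <|
      measure_mono fun b hb => hup (show (a, b) ≤ (a', b) from ⟨ha, le_rfl⟩) hb
  have hofReal : ∀ a, ENNReal.ofReal (ν₂ (Prod.mk a ⁻¹' s)).toReal = ν₂ (Prod.mk a ⁻¹' s) :=
    fun a => ofReal_toReal (measure_ne_top _ _)
  rw [Measure.prod_apply hs, Measure.prod_apply hs]
  calc ∫⁻ a, μ₂ (Prod.mk a ⁻¹' s) ∂μ₁
      ≤ ∫⁻ a, ν₂ (Prod.mk a ⁻¹' s) ∂μ₁ :=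
        lintegral_mono fun a => h₂ _ (hslice a) fun b b' hb => hup ⟨le_rfl, hb⟩
    _ ≤ ∫⁻ a, ν₂ (Prod.mk a ⁻¹' s) ∂ν₁ := by
        simpa only [hofReal] using h₁.lintegral_le hmono
          (measurable_measure_prodMk_left hs).ennreal_toReal fun _ => toReal_nonneg

theorem StochasticallyLE.pi_fin {n : ℕ} {π : Fin n → Type*} [∀ i, MeasurableSpace (π i)]
    [∀ i, Preorder (π i)] {μ ν : ∀ i, Measure (π i)} [∀ i, SigmaFinite (μ i)]
    [∀ i, IsFiniteMeasure (ν i)] (h : ∀ i, StochasticallyLE (μ i) (ν i)) :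
    StochasticallyLE (Measure.pi μ) (Measure.pi ν) := by
  induction n with
  | zero => rw [Measure.pi_of_empty μ, Measure.pi_of_empty ν]; exact fun _ _ _ => le_rfl
  | succ n ih =>
    intro s hs hup
    let e := MeasurableEquiv.piFinSuccAbove π 0
    have hmono : Monotone e.symm := fun x y hxy => by
      change Fin.insertNth 0 x.1 x.2 ≤ Fin.insertNth 0 y.1 y.2
      simp only [Fin.insertNth_zero]
      exact Fin.cons_le_cons.mpr hxy
    rw [← (measurePreserving_piFinSuccAbove μ 0).symm.measure_preimage_equiv,
      ← (measurePreserving_piFinSuccAbove ν 0).symm.measure_preimage_equiv]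
    exact (h 0).prod (ih fun j => h _) _ (e.symm.measurable hs) (hup.preimage hmono)

theorem StochasticallyLE.pi {ι : Type*} [Fintype ι] {π : ι → Type*} [∀ i, MeasurableSpace (π i)]
    [∀ i, Preorder (π i)] {μ ν : ∀ i, Measure (π i)} [∀ i, SigmaFinite (μ i)]
    [∀ i, IsFiniteMeasure (ν i)] (h : ∀ i, StochasticallyLE (μ i) (ν i)) :
    StochasticallyLE (Measure.pi μ) (Measure.pi ν) := by
  intro s hs hup
  let f := (Fintype.equivFin ι).symm
  let e := MeasurableEquiv.piCongrLeft π f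
  have hmono : Monotone e := fun x y hxy i => by
    obtain ⟨b, rfl⟩ := f.surjective i
    simpa [e, MeasurableEquiv.coe_piCongrLeft, Equiv.piCongrLeft_apply_apply] using hxy b
  rw [← (measurePreserving_piCongrLeft μ f).measure_preimage_equiv,
    ← (measurePreserving_piCongrLeft ν f).measure_preimage_equiv]
  exact pi_fin (fun i => h (f i)) _ (e.measurable hs) (hup.preimage hmono)

end MeasureTheory.Measure

theorem PMF.stochasticallyLE_toMeasure_of_tail_le {μ ν : PMF ℕ}
    (h : ∀ k : ℕ, (∑' j : ℕ, if k ≤ j then μ j else 0) ≤ ∑' j : ℕ, if k ≤ j then ν j else 0) :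
    μ.toMeasure.StochasticallyLE ν.toMeasure := by
  intro s hs hup
  obtain rfl | ⟨k, rfl⟩ := hup.eq_empty_or_Ici
  · simp
  · simpa [PMF.toMeasure_apply _ hs, Set.indicator_apply] using h k

theorem ProbabilityTheory.iIndepFun.measure_preimage_eq_pi {Ω κ ι α : Type*}
    [MeasurableSpace Ω] [MeasurableSpace α] [Fintype ι] {P : Measure Ω} {m : Measure α}
    {X : κ → Ω → α} (hX : ∀ k, Measurable (X k)) (hlaw : ∀ k, P.map (X k) = m)
    (hindep : iIndepFun X P) {g : ι → κ} (hg : g.Injective) {s : Set (ι → α)}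
    (hs : MeasurableSet s) :
    P ((fun ω i => X (g i) ω) ⁻¹' s) = Measure.pi (fun _ => m) s := by
  rw [← Measure.map_apply (measurable_pi_lambda _ fun i => hX (g i)) hs,
    (hindep.precomp hg).map_fun_eq_pi_map fun i => (hX (g i)).aemeasurable]
  simp only [hlaw]

namespace GaltonWatson

variable {x y : ℕ × ℕ → ℕ}

def generation (x : ℕ × ℕ → ℕ) : ℕ → ℕ
  | 0 => 1
  | k + 1 => ∑ i ∈ Finset.range (generation x k), x (k, i)

noncomputable def totalProgeny (x : ℕ × ℕ → ℕ) : ℝ≥0∞ :=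
  ∑' k, (generation x k : ℝ≥0∞)

theorem eq_generation {Z : ℕ → ℕ} (h0 : Z 0 = 1)
    (hrec : ∀ k, Z (k + 1) = ∑ i ∈ Finset.range (Z k), x (k, i)) : Z = generation x := by
  funext k
  induction k with
  | zero => exact h0
  | succ k ih => rw [hrec, ih, generation]

theorem tsum_eq_totalProgeny {Z : ℕ → ℕ} (h0 : Z 0 = 1)
    (hrec : ∀ k, Z (k + 1) = ∑ i ∈ Finset.range (Z k), x (k, i)) :
    ∑' k, (Z k : ℝ≥0∞) = totalProgeny x := by
  rw [eq_generation h0 hrec, totalProgeny]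

theorem generation_mono (h : x ≤ y) : generation x ≤ generation y := by
  intro k
  induction k with
  | zero => exact le_rfl
  | succ k ih =>
    calc ∑ i ∈ Finset.range (generation x k), x (k, i)
        ≤ ∑ i ∈ Finset.range (generation y k), x (k, i) :=
          Finset.sum_le_sum_of_subset (Finset.range_subset_range.mpr ih)
      _ ≤ ∑ i ∈ Finset.range (generation y k), y (k, i) :=
          Finset.sum_le_sum fun i _ => h (k, i)

theorem totalProgeny_mono : Monotone totalProgeny := fun _ _ h =>
  ENNReal.tsum_le_tsum fun k => by exact_mod_cast generation_mono h k

theorem generation_eq_zero_of_le {j k : ℕ} (h : generation x j = 0) (hjk : j ≤ k) :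
    generation x k = 0 := by
  induction k, hjk using Nat.le_induction with
  | base => exact h
  | succ k _ ih => rw [generation, ih, Finset.sum_range_zero]

theorem generation_le_totalProgeny (k : ℕ) : (generation x k : ℝ≥0∞) ≤ totalProgeny x :=
  ENNReal.le_tsum k

theorem succ_le_totalProgeny {k : ℕ} (h : generation x k ≠ 0) :
    (k + 1 : ℝ≥0∞) ≤ totalProgeny x :=
  calc (k + 1 : ℝ≥0∞) = ∑ _j ∈ Finset.range (k + 1), (1 : ℝ≥0∞) := by simp
    _ ≤ ∑ j ∈ Finset.range (k + 1), (generation x j : ℝ≥0∞) :=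
        Finset.sum_le_sum fun j hj => by
          have hjk : j ≤ k := Nat.lt_succ_iff.mp (Finset.mem_range.mp hj)
          exact_mod_cast Nat.one_le_iff_ne_zero.mpr fun h0 => h (generation_eq_zero_of_le h0 hjk)
    _ ≤ totalProgeny x := ENNReal.sum_le_tsum _

theorem generation_eq_of_eqOn_box {n : ℕ} (hxy : Set.EqOn x y (Set.Iio n ×ˢ Set.Iio n))
    (hx : totalProgeny x < n) : generation x = generation y := by
  funext k
  induction k with
  | zero => rfl
  | succ k ih =>
    rw [generation, generation, ← ih]
    refine Finset.sum_congr rfl fun i hi => hxy (Set.mk_mem_prod ?_ ?_)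
    · have hk : generation x k ≠ 0 := by have := Finset.mem_range.mp hi; omega
      have hkn : (k + 1 : ℝ≥0∞) < n := (succ_le_totalProgeny hk).trans_lt hx
      exact Nat.lt_of_succ_lt (by exact_mod_cast hkn)
    · have hin : (i : ℝ≥0∞) < generation x k := by exact_mod_cast Finset.mem_range.mp hi
      exact_mod_cast hin.trans_le (generation_le_totalProgeny k) |>.trans hx

theorem le_totalProgeny_iff_of_eqOn_box {n : ℕ} (hxy : Set.EqOn x y (Set.Iio n ×ˢ Set.Iio n)) :
    (n : ℝ≥0∞) ≤ totalProgeny x ↔ (n : ℝ≥0∞) ≤ totalProgeny y := by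
  rw [← not_lt, ← not_lt, not_iff_not]
  constructor
  · intro hx
    rwa [totalProgeny, ← generation_eq_of_eqOn_box hxy hx]
  · intro hy
    rwa [totalProgeny, ← generation_eq_of_eqOn_box hxy.symm hy]

theorem exists_isUpperSet_le_totalProgeny_iff (n : ℕ) :
    ∃ S : Set (Fin n × Fin n → ℕ), IsUpperSet S ∧
      ∀ x, (n : ℝ≥0∞) ≤ totalProgeny x ↔ (fun q : Fin n × Fin n => x (q.1, q.2)) ∈ S := by
  classical
  let box : Fin n × Fin n → ℕ × ℕ := fun q => (q.1, q.2)
  have hbox : box.Injective := fun q q' h => by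
    simpa [box, Prod.ext_iff, Fin.ext_iff] using h
  refine ⟨{y | (n : ℝ≥0∞) ≤ totalProgeny (Function.extend box y 0)}, ?_, fun x => ?_⟩
  · refine fun y y' hy h => h.trans (totalProgeny_mono fun p => ?_)
    simp only [Function.extend_def]
    split_ifs
    exacts [hy _, le_rfl]
  · exact le_totalProgeny_iff_of_eqOn_box fun p hp =>
      (hbox.extend_apply (fun q => x (q.1, q.2)) 0 (⟨p.1, hp.1⟩, ⟨p.2, hp.2⟩)).symm

end GaltonWatson

theorem gw_total_progeny_stochastic_domination_general
    {Ω₁ : Type*} [MeasureSpace Ω₁]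
    {Ω₂ : Type*} [MeasureSpace Ω₂]
    (μ ν : PMF ℕ)
    (hdom : ∀ k : ℕ, (∑' j : ℕ, if k ≤ j then μ j else 0)
      ≤ ∑' j : ℕ, if k ≤ j then ν j else 0)
    -- Galton–Watson process with offspring law `μ`
    (ξ₁ : ℕ → ℕ → Ω₁ → ℕ)
    (hmeas₁ : ∀ n i, Measurable (ξ₁ n i))
    (hdist₁ : ∀ n i, Measure.map (ξ₁ n i) ℙ = μ.toMeasure)
    (hindep₁ : iIndepFun (fun p : ℕ × ℕ => ξ₁ p.1 p.2) ℙ)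
    (Z₁ : ℕ → Ω₁ → ℕ)
    (hZ₁0 : ∀ ω, Z₁ 0 ω = 1)
    (hZ₁rec : ∀ n ω, Z₁ (n + 1) ω = ∑ i ∈ Finset.range (Z₁ n ω), ξ₁ n i ω)
    -- Galton–Watson process with offspring law `ν`
    (ξ₂ : ℕ → ℕ → Ω₂ → ℕ)
    (hmeas₂ : ∀ n i, Measurable (ξ₂ n i))
    (hdist₂ : ∀ n i, Measure.map (ξ₂ n i) ℙ = ν.toMeasure)
    (hindep₂ : iIndepFun (fun p : ℕ × ℕ => ξ₂ p.1 p.2) ℙ)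
    (Z₂ : ℕ → Ω₂ → ℕ)
    (hZ₂0 : ∀ ω, Z₂ 0 ω = 1)
    (hZ₂rec : ∀ n ω, Z₂ (n + 1) ω = ∑ i ∈ Finset.range (Z₂ n ω), ξ₂ n i ω) :
    ∀ n : ℕ, ℙ {ω : Ω₁ | (n : ℝ≥0∞) ≤ ∑' k : ℕ, (Z₁ k ω : ℝ≥0∞)}
      ≤ ℙ {ω : Ω₂ | (n : ℝ≥0∞) ≤ ∑' k : ℕ, (Z₂ k ω : ℝ≥0∞)} := by
  intro n
  obtain ⟨S, hS, hevent⟩ := GaltonWatson.exists_isUpperSet_le_totalProgeny_iff n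
  have hbox : Function.Injective fun q : Fin n × Fin n => ((q.1 : ℕ), (q.2 : ℕ)) :=
    fun q q' h => by simpa [Prod.ext_iff, Fin.ext_iff] using h
  have hset₁ : {ω : Ω₁ | (n : ℝ≥0∞) ≤ ∑' k : ℕ, (Z₁ k ω : ℝ≥0∞)}
      = (fun ω (q : Fin n × Fin n) => ξ₁ q.1 q.2 ω) ⁻¹' S := by
    ext ω
    rw [Set.mem_ofPred_eq, GaltonWatson.tsum_eq_totalProgeny (Z := (Z₁ · ω))
      (x := fun p => ξ₁ p.1 p.2 ω) (hZ₁0 ω) (hZ₁rec · ω)]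
    exact hevent _
  have hset₂ : {ω : Ω₂ | (n : ℝ≥0∞) ≤ ∑' k : ℕ, (Z₂ k ω : ℝ≥0∞)}
      = (fun ω (q : Fin n × Fin n) => ξ₂ q.1 q.2 ω) ⁻¹' S := by
    ext ω
    rw [Set.mem_ofPred_eq, GaltonWatson.tsum_eq_totalProgeny (Z := (Z₂ · ω))
      (x := fun p => ξ₂ p.1 p.2 ω) (hZ₂0 ω) (hZ₂rec · ω)]
    exact hevent _
  have hSmeas : MeasurableSet S := S.to_countable.measurableSet
  rw [hset₁, hset₂,
    hindep₁.measure_preimage_eq_pi (fun p => hmeas₁ p.1 p.2) (fun p => hdist₁ p.1 p.2) hbox hSmeas,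
    hindep₂.measure_preimage_eq_pi (fun p => hmeas₂ p.1 p.2) (fun p => hdist₂ p.1 p.2) hbox hSmeas]
  exact (Measure.StochasticallyLE.pi fun _ => PMF.stochasticallyLE_toMeasure_of_tail_le hdom)
    S hSmeas hS

/-- Stochastic domination of offspring laws implies stochastic domination of total
progenies of the corresponding Galton–Watson processes. -/
theorem gw_total_progeny_stochastic_domination
    {Ω₁ : Type*} [MeasureSpace Ω₁] [IsProbabilityMeasure (ℙ : Measure Ω₁)]
    {Ω₂ : Type*} [MeasureSpace Ω₂] [IsProbabilityMeasure (ℙ : Measure Ω₂)]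
    (μ ν : PMF ℕ)
    (hdom : ∀ k : ℕ, (∑' j : ℕ, if k ≤ j then μ j else 0)
      ≤ ∑' j : ℕ, if k ≤ j then ν j else 0)
    -- Galton–Watson process with offspring law `μ`
    (ξ₁ : ℕ → ℕ → Ω₁ → ℕ)
    (hmeas₁ : ∀ n i, Measurable (ξ₁ n i))
    (hdist₁ : ∀ n i, Measure.map (ξ₁ n i) ℙ = μ.toMeasure)
    (hindep₁ : iIndepFun (fun p : ℕ × ℕ => ξ₁ p.1 p.2) ℙ)
    (Z₁ : ℕ → Ω₁ → ℕ)
    (hZ₁0 : ∀ ω, Z₁ 0 ω = 1)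
    (hZ₁rec : ∀ n ω, Z₁ (n + 1) ω = ∑ i ∈ Finset.range (Z₁ n ω), ξ₁ n i ω)
    -- Galton–Watson process with offspring law `ν`
    (ξ₂ : ℕ → ℕ → Ω₂ → ℕ)
    (hmeas₂ : ∀ n i, Measurable (ξ₂ n i))
    (hdist₂ : ∀ n i, Measure.map (ξ₂ n i) ℙ = ν.toMeasure)
    (hindep₂ : iIndepFun (fun p : ℕ × ℕ => ξ₂ p.1 p.2) ℙ)
    (Z₂ : ℕ → Ω₂ → ℕ)
    (hZ₂0 : ∀ ω, Z₂ 0 ω = 1)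
    (hZ₂rec : ∀ n ω, Z₂ (n + 1) ω = ∑ i ∈ Finset.range (Z₂ n ω), ξ₂ n i ω) :
    ∀ n : ℕ, ℙ {ω : Ω₁ | (n : ℝ≥0∞) ≤ ∑' k : ℕ, (Z₁ k ω : ℝ≥0∞)}
      ≤ ℙ {ω : Ω₂ | (n : ℝ≥0∞) ≤ ∑' k : ℕ, (Z₂ k ω : ℝ≥0∞)} :=
  gw_total_progeny_stochastic_domination_general μ ν hdom ξ₁ hmeas₁ hdist₁ hindep₁ Z₁ hZ₁0 hZ₁rec ξ₂
    hmeas₂ hdist₂ hindep₂ Z₂ hZ₂0 hZ₂rec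
end
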